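/- Let M be a compact complex manifold with the ∂∂̄ property and let p ≥ 1. Then M admits no nonzero exact (p,0)-form and no nonzero exact (0,p)-form. -/
import Mathlib


/-!
An abstract axiomatization of (compact, connected) smooth manifolds,
complex manifolds with the `∂∂̄`-property, and pseudo-Kähler structures,
following Derdzinski, "Affine vector fields on compact pseudo-Kähler
manifolds".

Tangent spaces, smooth functions/vector fields/forms, the Lie bracket,
the exterior derivative `d` and the Dolbeault operators `∂`, `∂̄` are
axiomatized, together with their standard properties.
-/

noncomputable section

open Function

/-- The pointwise data of a manifold: a carrier with a topology together with
finite-dimensional real tangent spaces of constant dimension. -/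
structure TangentData where
  /-- the underlying set of the manifold -/
  M : Type
  topM : TopologicalSpace M
  /-- the tangent space at each point -/
  T : M → Type
  instAddCommGroupT : ∀ x, AddCommGroup (T x)
  instModuleT : ∀ x, Module ℝ (T x)
  instFiniteDimensionalT : ∀ x, FiniteDimensional ℝ (T x)
  /-- the dimension of the manifold -/
  dim : ℕ
  finrank_T : ∀ x, Module.finrank ℝ (T x) = dim

attribute [instance] TangentData.topM TangentData.instAddCommGroupT
  TangentData.instModuleT TangentData.instFiniteDimensionalT

/-- Complex-valued alternating `k`-form fields (not yet assumed smooth). -/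
abbrev TangentData.FormField (P : TangentData) (k : ℕ) :=
  ∀ x, AlternatingMap ℝ (P.T x) ℂ (Fin k)

/-- A complex-valued form field is *real* if all of its values are real. -/
def TangentData.IsRealForm (P : TangentData) {k : ℕ} (ζ : P.FormField k) : Prop :=
  ∀ x vs, (ζ x vs).im = 0

/-- Re-indexing of form fields along an equality of degrees. -/
def TangentData.formCast (P : TangentData) {k l : ℕ} (h : k = l)
    (ζ : P.FormField k) : P.FormField l := h ▸ ζ

/-- The `0`-form field associated with a complex-valued function. -/
def TangentData.zeroForm (P : TangentData) (f : P.M → ℂ) : P.FormField 0 :=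
  fun x => AlternatingMap.constOfIsEmpty ℝ (P.T x) (Fin 0) (f x)

/-- A complex-valued `k`-form field `ζ` is of type `(p,q)` (relative to an
almost complex structure `J`) iff it satisfies the standard eigenvalue
characterization `∑ i, ζ(v₁, …, Jvᵢ, …, v_k) = i(p-q)·ζ(v₁, …, v_k)`. -/
def TangentData.IsTypePQ (P : TangentData) (J : ∀ x, P.T x →ₗ[ℝ] P.T x)
    (p q : ℕ) {k : ℕ} (ζ : P.FormField k) : Prop :=
  ∀ x (vs : Fin k → P.T x),
    (∑ i, ζ x (Function.update vs i (J x (vs i)))) =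
      ((p : ℂ) - (q : ℂ)) * Complex.I * ζ x vs

/-- The smooth structure of a manifold: smooth functions and vector fields,
the directional derivative, and the Lie bracket, with their standard
properties. -/
structure SmoothManifoldData (P : TangentData) where
  /-- smooth real-valued functions -/
  IsSmoothFun : (P.M → ℝ) → Prop
  /-- smooth vector fields -/
  IsSmoothVF : (∀ x, P.T x) → Prop
  /-- the directional derivative of a function along a vector field -/
  vfD : (∀ x, P.T x) → (P.M → ℝ) → (P.M → ℝ)
  /-- the Lie bracket of vector fields -/
  bracket : (∀ x, P.T x) → (∀ x, P.T x) → (∀ x, P.T x)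
  smoothFun_const : ∀ c : ℝ, IsSmoothFun fun _ => c
  smoothFun_add : ∀ f g, IsSmoothFun f → IsSmoothFun g → IsSmoothFun (f + g)
  smoothFun_mul : ∀ f g, IsSmoothFun f → IsSmoothFun g → IsSmoothFun (f * g)
  smoothFun_continuous : ∀ f, IsSmoothFun f → Continuous f
  smoothVF_add : ∀ X Y, IsSmoothVF X → IsSmoothVF Y → IsSmoothVF (X + Y)
  smoothVF_smul : ∀ (f : P.M → ℝ) X, IsSmoothFun f → IsSmoothVF X →
    IsSmoothVF fun x => f x • X x
  smoothVF_bracket : ∀ X Y, IsSmoothVF X → IsSmoothVF Y → IsSmoothVF (bracket X Y)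
  vfD_smooth : ∀ X f, IsSmoothVF X → IsSmoothFun f → IsSmoothFun (vfD X f)
  vfD_add : ∀ X f g, vfD X (f + g) = vfD X f + vfD X g
  vfD_mul : ∀ X f g, vfD X (f * g) = f * vfD X g + g * vfD X f
  vfD_const : ∀ X (c : ℝ), vfD X (fun _ => c) = 0
  vfD_add_vf : ∀ X Y f, vfD (X + Y) f = vfD X f + vfD Y f
  vfD_smul_vf : ∀ (g : P.M → ℝ) X f, vfD (fun x => g x • X x) f = g * vfD X f
  bracket_antisymm : ∀ X Y, bracket X Y = -bracket Y X
  bracket_add_left : ∀ X Y Z, bracket (X + Y) Z = bracket X Z + bracket Y Z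
  bracket_leibniz : ∀ (f : P.M → ℝ) X Y, IsSmoothFun f → IsSmoothVF X → IsSmoothVF Y →
    bracket X (fun x => f x • Y x) =
      fun x => vfD X f x • Y x + f x • bracket X Y x
  bracket_apply : ∀ X Y f, IsSmoothVF X → IsSmoothVF Y → IsSmoothFun f →
    vfD (bracket X Y) f = vfD X (vfD Y f) - vfD Y (vfD X f)
  /-- every tangent vector is the value of a smooth vector field -/
  enough_vf : ∀ x (t : P.T x), ∃ X, IsSmoothVF X ∧ X x = t

/-- The directional derivative of a complex-valued function. -/
def SmoothManifoldData.vfDC {P : TangentData} (S : SmoothManifoldData P)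
    (X : ∀ x, P.T x) (f : P.M → ℂ) : P.M → ℂ :=
  fun x => (S.vfD X (fun y => (f y).re) x : ℂ) +
    Complex.I * (S.vfD X (fun y => (f y).im) x : ℂ)

/-- A complex-valued function is smooth iff its real and imaginary parts are. -/
def SmoothManifoldData.IsSmoothFunC {P : TangentData} (S : SmoothManifoldData P)
    (f : P.M → ℂ) : Prop :=
  S.IsSmoothFun (fun x => (f x).re) ∧ S.IsSmoothFun (fun x => (f x).im)

/-- The structure of a complex manifold: the complex-structure tensor `J`,
smooth complex-valued differential forms, the exterior derivative and the
Dolbeault operators `∂` and `∂̄`, a notion of (locally defined) holomorphic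
functions and real-holomorphic vector fields, and the Euler characteristic,
with their standard properties. -/
structure ComplexManifoldData (P : TangentData) (S : SmoothManifoldData P) where
  /-- the complex structure tensor -/
  J : ∀ x, P.T x →ₗ[ℝ] P.T x
  J_squared : ∀ x (t : P.T x), J x (J x t) = -t
  J_smooth : ∀ X, S.IsSmoothVF X → S.IsSmoothVF fun x => J x (X x)
  /-- smooth complex-valued `k`-forms -/
  IsSmoothForm : ∀ {k : ℕ}, P.FormField k → Prop
  smoothForm_add : ∀ {k} (ζ η : P.FormField k),
    IsSmoothForm ζ → IsSmoothForm η → IsSmoothForm (ζ + η)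
  smoothForm_smul : ∀ {k} (c : ℂ) (ζ : P.FormField k),
    IsSmoothForm ζ → IsSmoothForm (c • ζ)
  smoothForm_zeroForm : ∀ f : P.M → ℂ, S.IsSmoothFunC f → IsSmoothForm (P.zeroForm f)
  /-- the exterior derivative -/
  extd : ∀ {k : ℕ}, P.FormField k → P.FormField (k + 1)
  /-- the Dolbeault operator `∂` -/
  pd : ∀ {k : ℕ}, P.FormField k → P.FormField (k + 1)
  /-- the Dolbeault operator `∂̄` -/
  pdbar : ∀ {k : ℕ}, P.FormField k → P.FormField (k + 1)
  extd_smooth : ∀ {k} (ζ : P.FormField k), IsSmoothForm ζ → IsSmoothForm (extd ζ)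
  pd_smooth : ∀ {k} (ζ : P.FormField k), IsSmoothForm ζ → IsSmoothForm (pd ζ)
  pdbar_smooth : ∀ {k} (ζ : P.FormField k), IsSmoothForm ζ → IsSmoothForm (pdbar ζ)
  extd_add : ∀ {k} (ζ η : P.FormField k), extd (ζ + η) = extd ζ + extd η
  extd_extd : ∀ {k} (ζ : P.FormField k), extd (extd ζ) = 0
  extd_eq_pd_add_pdbar : ∀ {k} (ζ : P.FormField k), IsSmoothForm ζ →
    extd ζ = pd ζ + pdbar ζ
  pd_pd : ∀ {k} (ζ : P.FormField k), IsSmoothForm ζ → pd (pd ζ) = 0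
  pdbar_pdbar : ∀ {k} (ζ : P.FormField k), IsSmoothForm ζ → pdbar (pdbar ζ) = 0
  pd_type : ∀ (p q : ℕ) {k} (ζ : P.FormField k), IsSmoothForm ζ →
    P.IsTypePQ J p q ζ → P.IsTypePQ J (p + 1) q (pd ζ)
  pdbar_type : ∀ (p q : ℕ) {k} (ζ : P.FormField k), IsSmoothForm ζ →
    P.IsTypePQ J p q ζ → P.IsTypePQ J p (q + 1) (pdbar ζ)
  extd_real : ∀ {k} (ζ : P.FormField k), P.IsRealForm ζ → P.IsRealForm (extd ζ)
  /-- on `0`-forms, the exterior derivative is the directional derivative -/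
  extd_zeroForm : ∀ (f : P.M → ℝ), S.IsSmoothFun f → ∀ (X : ∀ x, P.T x), S.IsSmoothVF X →
    (fun x => extd (P.zeroForm fun y => (f y : ℂ)) x fun _ => X x) =
      fun x => (S.vfD X f x : ℂ)
  /-- Cartan's formula for the differential of a `1`-form -/
  cartan_oneForm : ∀ (ζ : P.FormField 1), IsSmoothForm ζ →
    ∀ X Y, S.IsSmoothVF X → S.IsSmoothVF Y →
      (fun x => extd ζ x ![X x, Y x]) =
        fun x => S.vfDC X (fun y => ζ y fun _ => Y y) x
          - S.vfDC Y (fun y => ζ y fun _ => X y) x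
          - ζ x fun _ => (S.bracket X Y) x
  /-- every smooth `k`-form decomposes into components of pure type `(r,s)`,
  `r + s = k` -/
  type_decomposition : ∀ (k : ℕ) (ζ : P.FormField k), IsSmoothForm ζ →
    ∃ comp : ℕ → ℕ → P.FormField k,
      (∀ r s, IsSmoothForm (comp r s)) ∧
      (∀ r s, P.IsTypePQ J r s (comp r s)) ∧
      (∀ r s, r + s ≠ k → comp r s = 0) ∧
      ζ = ∑ r ∈ Finset.range (k + 1), comp r (k - r)
  /-- holomorphy of a complex-valued function on an open subset -/
  IsHolomorphicFunOn : Set P.M → (P.M → ℂ) → Prop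
  holFun_mono : ∀ (U V : Set P.M) f, U ⊆ V →
    IsHolomorphicFunOn V f → IsHolomorphicFunOn U f
  /-- real holomorphy of a vector field defined on an open subset -/
  IsRealHolomorphicVFOn : Set P.M → (∀ x, P.T x) → Prop
  realHolVF_mono : ∀ (U V : Set P.M) w, U ⊆ V →
    IsRealHolomorphicVFOn V w → IsRealHolomorphicVFOn U w
  /-- a globally defined vector field is real holomorphic iff it is smooth and
  its local flow preserves `J`, i.e. `£_w J = 0` -/
  realHolVF_univ : ∀ w, IsRealHolomorphicVFOn Set.univ w ↔
    (S.IsSmoothVF w ∧ ∀ X, S.IsSmoothVF X →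
      S.bracket w (fun x => J x (X x)) = fun x => J x ((S.bracket w X) x))
  /-- the Euler characteristic -/
  eulerChar : ℤ
  /-- Poincaré–Hopf: a nowhere-zero smooth vector field forces `χ(M) = 0` -/
  eulerChar_eq_zero_of_nonvanishing :
    (∃ w : ∀ x, P.T x, S.IsSmoothVF w ∧ ∀ x, w x ≠ 0) → eulerChar = 0

/-- The `∂∂̄`-property: for all `p, q ≥ 0`, any closed `∂`-exact or `∂̄`-exact
`(p,q)`-form equals `∂∂̄λ` for some `(p-1,q-1)`-form `λ` (when `p = 0` or
`q = 0` there are no `(p-1,q-1)`-forms and the form must vanish). -/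
def ComplexManifoldData.DdbarProperty {P : TangentData} {S : SmoothManifoldData P}
    (C : ComplexManifoldData P S) : Prop :=
  ∀ (p q : ℕ) (ζ : P.FormField (p + q)),
    C.IsSmoothForm ζ → P.IsTypePQ C.J p q ζ → C.extd ζ = 0 →
    ((∃ (m : ℕ) (hm : m + 1 = p + q) (η : P.FormField m),
        C.IsSmoothForm η ∧ ζ = P.formCast hm (C.pd η)) ∨
      (∃ (m : ℕ) (hm : m + 1 = p + q) (η : P.FormField m),
        C.IsSmoothForm η ∧ ζ = P.formCast hm (C.pdbar η))) →
    (((p = 0 ∨ q = 0) → ζ = 0) ∧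
      ∀ (r s : ℕ) (hp : p = r + 1) (hq : q = s + 1),
        ∃ lam : P.FormField (r + s),
          C.IsSmoothForm lam ∧ P.IsTypePQ C.J r s lam ∧
            ζ = P.formCast (by omega) (C.pd (C.pdbar lam)))

/-- A form field is exact if it is the exterior derivative of a smooth form. -/
def ComplexManifoldData.IsExactForm {P : TangentData} {S : SmoothManifoldData P}
    (C : ComplexManifoldData P S) {k : ℕ} (ζ : P.FormField k) : Prop :=
  ∃ (m : ℕ) (hm : m + 1 = k) (η : P.FormField m),
    C.IsSmoothForm η ∧ ζ = P.formCast hm (C.extd η)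

/-- A form field is parallel relative to a connection `conn` if its covariant
derivative vanishes. -/
def IsParallelForm {P : TangentData} (S : SmoothManifoldData P)
    (conn : (∀ x, P.T x) → (∀ x, P.T x) → (∀ x, P.T x)) {k : ℕ}
    (ζ : P.FormField k) : Prop :=
  ∀ X, S.IsSmoothVF X → ∀ Ys : Fin k → (∀ x, P.T x), (∀ i, S.IsSmoothVF (Ys i)) →
    S.vfDC X (fun x => ζ x fun i => Ys i x) =
      fun x => ∑ i, ζ x (Function.update (fun j => Ys j x) i ((conn X (Ys i)) x))

/-- A torsion-free connection on a complex manifold that makes `J` parallel. -/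
structure IsCompatibleConnection {P : TangentData} (S : SmoothManifoldData P)
    (C : ComplexManifoldData P S)
    (conn : (∀ x, P.T x) → (∀ x, P.T x) → (∀ x, P.T x)) : Prop where
  add_right : ∀ X Y Z, conn X (Y + Z) = conn X Y + conn X Z
  add_left : ∀ X Y Z, conn (X + Y) Z = conn X Z + conn Y Z
  smul_left : ∀ (f : P.M → ℝ) X Y, S.IsSmoothFun f → S.IsSmoothVF X → S.IsSmoothVF Y →
    conn (fun x => f x • X x) Y = fun x => f x • conn X Y x
  leibniz : ∀ (f : P.M → ℝ) X Y, S.IsSmoothFun f → S.IsSmoothVF X → S.IsSmoothVF Y →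
    conn X (fun x => f x • Y x) = fun x => S.vfD X f x • Y x + f x • conn X Y x
  smooth : ∀ X Y, S.IsSmoothVF X → S.IsSmoothVF Y → S.IsSmoothVF (conn X Y)
  torsion_free : ∀ X Y, S.IsSmoothVF X → S.IsSmoothVF Y →
    conn X Y - conn Y X = S.bracket X Y
  J_parallel : ∀ X Y, S.IsSmoothVF X → S.IsSmoothVF Y →
    conn X (fun x => C.J x (Y x)) = fun x => C.J x ((conn X Y) x)

/-- A pseudo-Kähler structure: a pseudo-Riemannian metric `g`, Hermitian
relative to `J`, whose Levi-Civita connection makes `J` parallel. -/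
structure PseudoKahlerData {P : TangentData} (S : SmoothManifoldData P)
    (C : ComplexManifoldData P S) where
  /-- the pseudo-Riemannian metric -/
  g : ∀ x, P.T x →ₗ[ℝ] P.T x →ₗ[ℝ] ℝ
  g_symm : ∀ x u w, g x u w = g x w u
  g_nondegenerate : ∀ x (u : P.T x), (∀ w, g x u w = 0) → u = 0
  g_smooth : ∀ X Y, S.IsSmoothVF X → S.IsSmoothVF Y →
    S.IsSmoothFun fun x => g x (X x) (Y x)
  g_hermitian : ∀ x u w, g x (C.J x u) (C.J x w) = g x u w
  /-- the Levi-Civita connection of `g` -/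
  conn : (∀ x, P.T x) → (∀ x, P.T x) → (∀ x, P.T x)
  conn_isCompatible : IsCompatibleConnection S C conn
  /-- `conn` is metric (this, with torsion-freeness, makes it the Levi-Civita
  connection of `g`) -/
  metric_compat : ∀ X Y Z, S.IsSmoothVF X → S.IsSmoothVF Y → S.IsSmoothVF Z →
    S.vfD X (fun x => g x (Y x) (Z x)) =
      fun x => g x ((conn X Y) x) (Z x) + g x (Y x) ((conn X Z) x)

section Derived

variable {P : TangentData} {S : SmoothManifoldData P} {C : ComplexManifoldData P S}

/-- The Lie derivative `£_v g` of the metric, evaluated on vector fields. -/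
def lieG (K : PseudoKahlerData S C) (v X Y : ∀ x, P.T x) : P.M → ℝ :=
  fun x => S.vfD v (fun y => K.g y (X y) (Y y)) x
    - K.g x ((S.bracket v X) x) (Y x) - K.g x (X x) ((S.bracket v Y) x)

/-- The Lie derivative `£_v ω` of the Kähler form `ω = g(J·,·)`, evaluated on
vector fields. -/
def lieOmega (K : PseudoKahlerData S C) (v X Y : ∀ x, P.T x) : P.M → ℝ :=
  fun x => S.vfD v (fun y => K.g y (C.J y (X y)) (Y y)) x
    - K.g x (C.J x ((S.bracket v X) x)) (Y x)
    - K.g x (C.J x (X x)) ((S.bracket v Y) x)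

/-- `v` is a Killing field iff `£_v g = 0`. -/
def IsKilling (K : PseudoKahlerData S C) (v : ∀ x, P.T x) : Prop :=
  ∀ X Y, S.IsSmoothVF X → S.IsSmoothVF Y → lieG K v X Y = 0

/-- `v` is an affine vector field iff its local flow preserves the Levi-Civita
connection, i.e. `£_v ∇ = 0`. -/
def IsAffine (K : PseudoKahlerData S C) (v : ∀ x, P.T x) : Prop :=
  ∀ X Y, S.IsSmoothVF X → S.IsSmoothVF Y →
    S.bracket v (K.conn X Y) =
      K.conn (S.bracket v X) Y + K.conn X (S.bracket v Y)

/-- `v` is real holomorphic iff `£_v J = 0`. -/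
def IsRealHolomorphicVF (C : ComplexManifoldData P S) (v : ∀ x, P.T x) : Prop :=
  ∀ X, S.IsSmoothVF X →
    S.bracket v (fun x => C.J x (X x)) = fun x => C.J x ((S.bracket v X) x)

/-- The endomorphism field `A` represents `∇v`. -/
def RepresentsGrad (K : PseudoKahlerData S C)
    (A : ∀ x, P.T x →ₗ[ℝ] P.T x) (v : ∀ x, P.T x) : Prop :=
  ∀ X, S.IsSmoothVF X → ∀ x, A x (X x) = (K.conn X v) x

/-- `B` is the pointwise `g`-adjoint of `A`. -/
def IsPointwiseAdjoint (K : PseudoKahlerData S C)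
    (B A : ∀ x, P.T x →ₗ[ℝ] P.T x) : Prop :=
  ∀ x u w, K.g x (B x u) w = K.g x u (A x w)

/-- The pointwise bilinear field `L` represents the Lie derivative `£_v g`. -/
def RepresentsLieG (K : PseudoKahlerData S C)
    (L : ∀ x, P.T x →ₗ[ℝ] P.T x →ₗ[ℝ] ℝ) (v : ∀ x, P.T x) : Prop :=
  ∀ X Y, S.IsSmoothVF X → S.IsSmoothVF Y →
    (fun x => L x (X x) (Y x)) = lieG K v X Y

/-- The `1`-form `(dφ)J : X ↦ dφ(JX)`. -/
def dphiJ (C : ComplexManifoldData P S) (φ : P.M → ℝ) : P.FormField 1 :=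
  fun x => ((C.extd (P.zeroForm fun y => (φ y : ℂ))) x).compLinearMap (C.J x)

/-- A holomorphic `1`-form: a smooth `(1,0)`-form annihilated by `∂̄`. -/
def IsHolomorphicOneForm (C : ComplexManifoldData P S) (η : P.FormField 1) : Prop :=
  C.IsSmoothForm η ∧ P.IsTypePQ C.J 1 0 η ∧ C.pdbar η = 0

/-- The complex quadratic differential `θ = β - i β(J·,·)` associated with a
real symmetric `2`-tensor field `β` (here given by `L`). -/
def thetaOf (C : ComplexManifoldData P S)
    (L : ∀ x, P.T x →ₗ[ℝ] P.T x →ₗ[ℝ] ℝ) : ∀ x, P.T x → P.T x → ℂ :=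
  fun x u w => (L x u w : ℂ) - Complex.I * (L x (C.J x u) w : ℂ)

/-- A holomorphic quadratic differential: a symmetric complex-bilinear section
`θ` of the second complex symmetric power of the complex dual of `TM` such
that `θ(w,w')` is holomorphic for all local real holomorphic vector fields
`w`, `w'`. -/
def IsHolQuadDiff (C : ComplexManifoldData P S)
    (θ : ∀ x, P.T x → P.T x → ℂ) : Prop :=
  (∀ x u u' w, θ x (u + u') w = θ x u w + θ x u' w) ∧
  (∀ x (c : ℝ) u w, θ x (c • u) w = c * θ x u w) ∧
  (∀ x u w, θ x u w = θ x w u) ∧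
  (∀ x u w, θ x (C.J x u) w = Complex.I * θ x u w) ∧
  (∀ U : Set P.M, IsOpen U → ∀ w w', C.IsRealHolomorphicVFOn U w →
    C.IsRealHolomorphicVFOn U w' →
      C.IsHolomorphicFunOn U fun x => θ x (w x) (w' x))

end Derived

/-- A Riemannian Kähler metric on a complex manifold, together with its
codifferential and the `L²` pairing (used to express Hodge theory). -/
structure RiemannKahlerData {P : TangentData} (S : SmoothManifoldData P)
    (C : ComplexManifoldData P S) where
  /-- the Riemannian metric -/
  h : ∀ x, P.T x →ₗ[ℝ] P.T x →ₗ[ℝ] ℝ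
  h_symm : ∀ x u w, h x u w = h x w u
  h_posdef : ∀ x (t : P.T x), t ≠ 0 → 0 < h x t t
  h_smooth : ∀ X Y, S.IsSmoothVF X → S.IsSmoothVF Y →
    S.IsSmoothFun fun x => h x (X x) (Y x)
  h_hermitian : ∀ x u w, h x (C.J x u) (C.J x w) = h x u w
  /-- the Kähler form `h(J·,·)` is closed -/
  kahlerForm_closed : ∃ ω : P.FormField 2, C.IsSmoothForm ω ∧ P.IsRealForm ω ∧
    (∀ x (u w : P.T x), ω x ![u, w] = (h x (C.J x u) w : ℂ)) ∧ C.extd ω = 0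
  /-- the codifferential `δ` of `h` -/
  codif : ∀ {k : ℕ}, P.FormField (k + 1) → P.FormField k
  codif_smooth : ∀ {k} (ζ : P.FormField (k + 1)),
    C.IsSmoothForm ζ → C.IsSmoothForm (codif ζ)
  codif_codif : ∀ {k} (ζ : P.FormField (k + 2)),
    C.IsSmoothForm ζ → codif (codif ζ) = 0
  /-- the pointwise inner product of forms induced by `h` -/
  formInner : ∀ {k : ℕ}, P.FormField k → P.FormField k → (P.M → ℝ)
  /-- integration against the volume density of `h` -/
  intg : (P.M → ℝ) → ℝ
  /-- `δ` is the formal adjoint of `d` -/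
  codif_adjoint : ∀ {k} (α : P.FormField k) (β : P.FormField (k + 1)),
    C.IsSmoothForm α → C.IsSmoothForm β →
      intg (formInner (C.extd α) β) = intg (formInner α (codif β))

/-- The positive index of inertia of a symmetric `2`-tensor field at a point. -/
def posIndex (P : TangentData) (β : ∀ x, P.T x →ₗ[ℝ] P.T x →ₗ[ℝ] ℝ) (x : P.M) : ℕ :=
  sSup {n | ∃ W : Submodule ℝ (P.T x), Module.finrank ℝ W = n ∧
    ∀ v ∈ W, v ≠ 0 → 0 < β x v v}

/-- The negative index of inertia of a symmetric `2`-tensor field at a point. -/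
def negIndex (P : TangentData) (β : ∀ x, P.T x →ₗ[ℝ] P.T x →ₗ[ℝ] ℝ) (x : P.M) : ℕ :=
  sSup {n | ∃ W : Submodule ℝ (P.T x), Module.finrank ℝ W = n ∧
    ∀ v ∈ W, v ≠ 0 → β x v v < 0}
namespace NoExactAux


lemma eig_lemma {V : Type*} [AddCommGroup V] [Module ℂ V] (L : V →ₗ[ℂ] V) :
    ∀ (t : Finset ℂ) (u : ℂ → V), (∀ c ∈ t, L (u c) = c • u c) →
      (∑ c ∈ t, u c) = 0 → ∀ c ∈ t, u c = 0 := by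
  intro t
  induction t using Finset.induction_on with
  | empty => simp
  | @insert a t ha ih =>
    intro u hu hsum c hc
    have hsum' : u a + ∑ c ∈ t, u c = 0 := by rwa [Finset.sum_insert ha] at hsum
    have hrest : ∑ c ∈ t, u c = -u a := by
      have := eq_neg_of_add_eq_zero_right hsum'
      rw [this]
    have key : ∀ c ∈ t, (c - a) • u c = 0 := by
      apply ih (fun c => (c - a) • u c)
      · intro c hc
        rw [map_smul, hu c (Finset.mem_insert_of_mem hc), smul_comm]
      · have : (∑ c ∈ t, (c - a) • u c) = L (∑ c ∈ t, u c) - a • (∑ c ∈ t, u c) := by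
          rw [map_sum, Finset.smul_sum, ← Finset.sum_sub_distrib]
          refine Finset.sum_congr rfl fun c hc => ?_
          rw [hu c (Finset.mem_insert_of_mem hc), sub_smul]
        rw [this, hrest, map_neg, hu a (Finset.mem_insert_self a t), smul_neg]
        abel
    have hz : ∀ d ∈ t, u d = 0 := by
      intro d hd
      have h := key d hd
      have hda : d - a ≠ 0 := sub_ne_zero.mpr (fun hda => ha (hda ▸ hd))
      exact (smul_eq_zero.mp h).resolve_left hda
    rcases Finset.mem_insert.mp hc with rfl | hc'
    · have : ∑ c ∈ t, u c = 0 := Finset.sum_eq_zero hz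
      rw [this] at hsum'
      simpa using hsum'
    · exact hz c hc' 


variable {P : TangentData}

def toFunL (P : TangentData) (k : ℕ) :
    (P.FormField k) →ₗ[ℂ] (∀ x, (Fin k → P.T x) → ℂ) where
  toFun ζ := fun x vs => ζ x vs
  map_add' _ _ := rfl
  map_smul' _ _ := rfl

def Lop (P : TangentData) (J : ∀ x, P.T x →ₗ[ℝ] P.T x) (k : ℕ) :
    (∀ x, (Fin k → P.T x) → ℂ) →ₗ[ℂ] (∀ x, (Fin k → P.T x) → ℂ) where
  toFun f := fun x vs => ∑ i, f x (Function.update vs i (J x (vs i)))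
  map_add' f g := by funext x vs; simp [Finset.sum_add_distrib]
  map_smul' c f := by funext x vs; simp [Finset.mul_sum]

lemma eigen_of_type (J : ∀ x, P.T x →ₗ[ℝ] P.T x) (r s : ℕ) {k : ℕ}
    (ζ : P.FormField k) (h : P.IsTypePQ J r s ζ) :
    Lop P J k (toFunL P k ζ) = (((r : ℂ) - s) * Complex.I) • toFunL P k ζ := by
  funext x vs
  exact h x vs

lemma toFunL_inj {k : ℕ} {ζ η : P.FormField k}
    (h : toFunL P k ζ = toFunL P k η) : ζ = η := by
  funext x
  exact AlternatingMap.ext fun vs => congrFun (congrFun h x) vs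

lemma extd_sum {S : SmoothManifoldData P} (C : ComplexManifoldData P S) {m : ℕ}
    (t : Finset ℕ) (f : ℕ → P.FormField m) :
    C.extd (∑ r ∈ t, f r) = ∑ r ∈ t, C.extd (f r) :=
  map_sum (AddMonoidHom.mk' C.extd (C.extd_add)) f t


lemma exact_component {S : SmoothManifoldData P} (C : ComplexManifoldData P S)
    {m : ℕ} (η : P.FormField m) (hη : C.IsSmoothForm η)
    (ζ : P.FormField (m + 1)) (hζ : ζ = C.extd η) (lam : ℂ)
    (heig : Lop P C.J (m + 1) (toFunL P (m + 1) ζ) = lam • toFunL P (m + 1) ζ) :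
    ∃ comp : ℕ → ℕ → P.FormField m,
      (∀ r s, C.IsSmoothForm (comp r s)) ∧
      toFunL P (m + 1) ζ =
        (∑ r ∈ (Finset.range (m + 1)).filter
            (fun r : ℕ => (2 * (r : ℂ) + 1 - m) * Complex.I = lam),
          toFunL P (m + 1) (C.pd (comp r (m - r)))) +
        (∑ r ∈ (Finset.range (m + 1)).filter
            (fun r : ℕ => (2 * (r : ℂ) - 1 - m) * Complex.I = lam),
          toFunL P (m + 1) (C.pdbar (comp r (m - r)))) := by
  classical
  obtain ⟨comp, hsm, htype, _, hdecomp⟩ := C.type_decomposition m η hη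
  refine ⟨comp, hsm, ?_⟩
  set V := ∀ x, (Fin (m + 1) → P.T x) → ℂ
  set L := Lop P C.J (m + 1) with hL
  set μ₁ : ℕ → ℂ := fun r => (2 * (r : ℂ) + 1 - m) * Complex.I with hμ₁
  set μ₂ : ℕ → ℂ := fun r => (2 * (r : ℂ) - 1 - m) * Complex.I with hμ₂
  set T : Finset ℂ :=
    ((Finset.range (m + 1)).image μ₁ ∪ (Finset.range (m + 1)).image μ₂) ∪ {lam} with hT
  set u : ℂ → V := fun c =>
    (∑ r ∈ (Finset.range (m + 1)).filter (fun r => μ₁ r = c),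
      toFunL P (m + 1) (C.pd (comp r (m - r)))) +
    (∑ r ∈ (Finset.range (m + 1)).filter (fun r => μ₂ r = c),
      toFunL P (m + 1) (C.pdbar (comp r (m - r)))) -
    (if c = lam then toFunL P (m + 1) ζ else 0) with hu
  -- eigenvector facts for the pieces
  have heig1 : ∀ r ∈ Finset.range (m + 1),
      L (toFunL P (m + 1) (C.pd (comp r (m - r)))) =
        μ₁ r • toFunL P (m + 1) (C.pd (comp r (m - r))) := by
    intro r hr
    have hrm : r ≤ m := Finset.mem_range_succ_iff.mp hr
    have h := eigen_of_type C.J (r + 1) (m - r) (C.pd (comp r (m - r)))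
      (C.pd_type r (m - r) _ (hsm r (m - r)) (htype r (m - r)))
    rw [h]
    congr 1
    rw [hμ₁]
    push_cast [Nat.cast_sub hrm]
    ring
  have heig2 : ∀ r ∈ Finset.range (m + 1),
      L (toFunL P (m + 1) (C.pdbar (comp r (m - r)))) =
        μ₂ r • toFunL P (m + 1) (C.pdbar (comp r (m - r))) := by
    intro r hr
    have hrm : r ≤ m := Finset.mem_range_succ_iff.mp hr
    have h := eigen_of_type C.J r (m - r + 1) (C.pdbar (comp r (m - r)))
      (C.pdbar_type r (m - r) _ (hsm r (m - r)) (htype r (m - r)))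
    rw [h]
    congr 1
    rw [hμ₂]
    push_cast [Nat.cast_sub hrm]
    ring
  have hueig : ∀ c ∈ T, L (u c) = c • u c := by
    intro c _
    rw [hu]
    simp only
    rw [map_sub, map_add, map_sum, map_sum, smul_sub, smul_add, Finset.smul_sum,
      Finset.smul_sum]
    congr 1
    · congr 1
      · refine Finset.sum_congr rfl fun r hr => ?_
        have hmem := Finset.mem_filter.mp hr
        rw [heig1 r hmem.1, hmem.2]
      · refine Finset.sum_congr rfl fun r hr => ?_
        have hmem := Finset.mem_filter.mp hr
        rw [heig2 r hmem.1, hmem.2]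
    · by_cases hcl : c = lam
      · rw [if_pos hcl, hcl, heig]
      · rw [if_neg hcl, map_zero, smul_zero]
  -- the sum over T vanishes
  have hsumT : ∑ c ∈ T, u c = 0 := by
    rw [hu]
    simp only
    rw [Finset.sum_sub_distrib, Finset.sum_add_distrib]
    have e1 : (∑ c ∈ T, ∑ r ∈ (Finset.range (m + 1)).filter (fun r => μ₁ r = c),
        toFunL P (m + 1) (C.pd (comp r (m - r)))) =
        ∑ r ∈ Finset.range (m + 1), toFunL P (m + 1) (C.pd (comp r (m - r))) := by
      refine Finset.sum_fiberwise_of_maps_to (fun r hr => ?_) _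
      exact Finset.mem_union_left _ (Finset.mem_union_left _ (Finset.mem_image_of_mem _ hr))
    have e2 : (∑ c ∈ T, ∑ r ∈ (Finset.range (m + 1)).filter (fun r => μ₂ r = c),
        toFunL P (m + 1) (C.pdbar (comp r (m - r)))) =
        ∑ r ∈ Finset.range (m + 1), toFunL P (m + 1) (C.pdbar (comp r (m - r))) := by
      refine Finset.sum_fiberwise_of_maps_to (fun r hr => ?_) _
      exact Finset.mem_union_left _ (Finset.mem_union_right _ (Finset.mem_image_of_mem _ hr))
    have e3 : (∑ c ∈ T, (if c = lam then toFunL P (m + 1) ζ else 0)) =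
        toFunL P (m + 1) ζ := by
      rw [Finset.sum_ite_eq' T lam (fun _ => toFunL P (m + 1) ζ)]
      rw [if_pos (Finset.mem_union_right _ (Finset.mem_singleton_self lam))]
    rw [e1, e2, e3]
    have e4 : (∑ r ∈ Finset.range (m + 1), toFunL P (m + 1) (C.pd (comp r (m - r)))) +
        (∑ r ∈ Finset.range (m + 1), toFunL P (m + 1) (C.pdbar (comp r (m - r)))) =
        toFunL P (m + 1) ζ := by
      rw [← Finset.sum_add_distrib]
      calc (∑ r ∈ Finset.range (m + 1),
              (toFunL P (m + 1) (C.pd (comp r (m - r))) +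
                toFunL P (m + 1) (C.pdbar (comp r (m - r)))))
          = ∑ r ∈ Finset.range (m + 1), toFunL P (m + 1) (C.extd (comp r (m - r))) := by
            refine Finset.sum_congr rfl fun r _ => ?_
            rw [C.extd_eq_pd_add_pdbar _ (hsm r (m - r)), map_add]
        _ = toFunL P (m + 1) (∑ r ∈ Finset.range (m + 1), C.extd (comp r (m - r))) :=
            (map_sum _ _ _).symm
        _ = toFunL P (m + 1) ζ := by rw [← extd_sum C, ← hdecomp, ← hζ]
    rw [e4, sub_self]
  have hulam := eig_lemma L T u hueig hsumT lam
    (Finset.mem_union_right _ (Finset.mem_singleton_self lam))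
  rw [hu] at hulam
  simp only [if_pos rfl] at hulam
  have := sub_eq_zero.mp hulam
  exact this.symm

lemma exact_pd {S : SmoothManifoldData P} (C : ComplexManifoldData P S)
    {m : ℕ} (η : P.FormField m) (hη : C.IsSmoothForm η)
    (ζ : P.FormField (m + 1)) (hζ : ζ = C.extd η)
    (htype : P.IsTypePQ C.J (m + 1) 0 ζ) :
    ∃ θ : P.FormField m, C.IsSmoothForm θ ∧ ζ = C.pd θ := by
  have heig := eigen_of_type C.J (m + 1) 0 ζ htype
  rw [show ((((m + 1 : ℕ) : ℂ) - ((0 : ℕ) : ℂ)) * Complex.I)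
      = (((m : ℂ) + 1) * Complex.I) by push_cast; ring] at heig
  obtain ⟨comp, hsm, hkey⟩ := exact_component C η hη ζ hζ (((m : ℂ) + 1) * Complex.I) heig
  have hf1 : (Finset.range (m + 1)).filter
      (fun r : ℕ => (2 * (r : ℂ) + 1 - m) * Complex.I = ((m : ℂ) + 1) * Complex.I)
      = {m} := by
    ext r
    simp only [Finset.mem_filter, Finset.mem_range, Finset.mem_singleton]
    constructor
    · rintro ⟨hr, heq⟩
      have h1 : (2 * (r : ℂ) + 1 - m) = (m : ℂ) + 1 :=
        mul_right_cancel₀ Complex.I_ne_zero heq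
      have h2 : (r : ℂ) = (m : ℂ) := by linear_combination h1 / 2
      exact_mod_cast h2
    · rintro rfl
      exact ⟨Nat.lt_succ_self _, by ring⟩
  have hf2 : (Finset.range (m + 1)).filter
      (fun r : ℕ => (2 * (r : ℂ) - 1 - m) * Complex.I = ((m : ℂ) + 1) * Complex.I)
      = ∅ := by
    refine Finset.filter_eq_empty_iff.mpr fun r hr => ?_
    intro heq
    have h1 : (2 * (r : ℂ) - 1 - m) = (m : ℂ) + 1 :=
      mul_right_cancel₀ Complex.I_ne_zero heq
    have h2 : (r : ℂ) = ((m + 1 : ℕ) : ℂ) := by push_cast; linear_combination h1 / 2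
    have h3 : r = m + 1 := by exact_mod_cast h2
    have := Finset.mem_range.mp hr
    omega
  rw [hf1, hf2] at hkey
  simp only [Finset.sum_singleton, Finset.sum_empty, add_zero] at hkey
  exact ⟨comp m (m - m), hsm m (m - m), toFunL_inj hkey⟩

lemma exact_pdbar {S : SmoothManifoldData P} (C : ComplexManifoldData P S)
    {m : ℕ} (η : P.FormField m) (hη : C.IsSmoothForm η)
    (ζ : P.FormField (m + 1)) (hζ : ζ = C.extd η)
    (htype : P.IsTypePQ C.J 0 (m + 1) ζ) :
    ∃ θ : P.FormField m, C.IsSmoothForm θ ∧ ζ = C.pdbar θ := by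
  have heig := eigen_of_type C.J 0 (m + 1) ζ htype
  rw [show ((((0 : ℕ) : ℂ) - ((m + 1 : ℕ) : ℂ)) * Complex.I)
      = ((-(m : ℂ) - 1) * Complex.I) by push_cast; ring] at heig
  obtain ⟨comp, hsm, hkey⟩ := exact_component C η hη ζ hζ ((-(m : ℂ) - 1) * Complex.I) heig
  have hf1 : (Finset.range (m + 1)).filter
      (fun r : ℕ => (2 * (r : ℂ) + 1 - m) * Complex.I = (-(m : ℂ) - 1) * Complex.I)
      = ∅ := by
    refine Finset.filter_eq_empty_iff.mpr fun r hr => ?_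
    intro heq
    have h1 : (2 * (r : ℂ) + 1 - m) = -(m : ℂ) - 1 :=
      mul_right_cancel₀ Complex.I_ne_zero heq
    have h2 : (r : ℂ) = -1 := by linear_combination h1 / 2
    have h3 : (r : ℤ) = -1 := by exact_mod_cast h2
    omega
  have hf2 : (Finset.range (m + 1)).filter
      (fun r : ℕ => (2 * (r : ℂ) - 1 - m) * Complex.I = (-(m : ℂ) - 1) * Complex.I)
      = {0} := by
    ext r
    simp only [Finset.mem_filter, Finset.mem_range, Finset.mem_singleton]
    constructor
    · rintro ⟨hr, heq⟩
      have h1 : (2 * (r : ℂ) - 1 - m) = -(m : ℂ) - 1 :=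
        mul_right_cancel₀ Complex.I_ne_zero heq
      have h2 : (r : ℂ) = 0 := by linear_combination h1 / 2
      exact_mod_cast h2
    · rintro rfl
      exact ⟨Nat.succ_pos m, by push_cast; ring⟩
  rw [hf1, hf2] at hkey
  simp only [Finset.sum_singleton, Finset.sum_empty, zero_add] at hkey
  exact ⟨comp 0 (m - 0), hsm 0 (m - 0), toFunL_inj hkey⟩

lemma hddbar_at {S : SmoothManifoldData P} {C : ComplexManifoldData P S}
    (hddbar : C.DdbarProperty) (p q k : ℕ) (hk : p + q = k) (ζ : P.FormField k)
    (h1 : C.IsSmoothForm ζ) (h2 : P.IsTypePQ C.J p q ζ) (h3 : C.extd ζ = 0)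
    (h4 : (∃ (m : ℕ) (hm : m + 1 = k) (η : P.FormField m),
            C.IsSmoothForm η ∧ ζ = P.formCast hm (C.pd η)) ∨
          (∃ (m : ℕ) (hm : m + 1 = k) (η : P.FormField m),
            C.IsSmoothForm η ∧ ζ = P.formCast hm (C.pdbar η))) :
    (p = 0 ∨ q = 0) → ζ = 0 := by
  subst hk
  exact (hddbar p q ζ h1 h2 h3 h4).1

end NoExactAux

/-- Let `M` be a compact complex manifold with the `∂∂̄`
property and `p ≥ 1`.  Then `M` admits no nonzero exact `(p,0)`-form and no
nonzero exact `(0,p)`-form. -/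
theorem no_nonzero_exact_pure_forms
    {P : TangentData} {S : SmoothManifoldData P} (C : ComplexManifoldData P S)
    (hcompact : CompactSpace P.M) (hddbar : C.DdbarProperty)
    (p : ℕ) (hp : 1 ≤ p)
    (ζ : P.FormField p) (hsm : C.IsSmoothForm ζ) (hexact : C.IsExactForm ζ) :
    (P.IsTypePQ C.J p 0 ζ → ζ = 0) ∧ (P.IsTypePQ C.J 0 p ζ → ζ = 0) := by
  obtain ⟨m, hm, η, hηsm, hζc⟩ := hexact
  subst hm
  have hζ : ζ = C.extd η := hζc
  have hclosed : C.extd ζ = 0 := by rw [hζ]; exact C.extd_extd η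
  constructor
  · intro htype
    obtain ⟨θ, hθsm, hθ⟩ := NoExactAux.exact_pd C η hηsm ζ hζ htype
    exact NoExactAux.hddbar_at hddbar (m + 1) 0 (m + 1) rfl ζ hsm htype hclosed
      (Or.inl ⟨m, rfl, θ, hθsm, hθ⟩) (Or.inr rfl)
  · intro htype
    obtain ⟨θ, hθsm, hθ⟩ := NoExactAux.exact_pdbar C η hηsm ζ hζ htype
    exact NoExactAux.hddbar_at hddbar 0 (m + 1) (m + 1) (Nat.zero_add _) ζ hsm htype hclosed
      (Or.inr ⟨m, rfl, θ, hθsm, hθ⟩) (Or.inl rfl)
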